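/- Let p₁, …, p_k be prime numbers, r₁, …, r_k positive integers with k ≥ 1, and R = (Z/p₁^{r₁}) × ⋯ × (Z/p_k^{r_k}). Then χ(Γ(R)) = ω(Γ(R)). -/

import Mathlib

/-- Beck's zero-divisor graph `Γ₀(R)`: vertices are all elements of `R`, and two
distinct vertices `x`, `y` are adjacent iff `x * y = 0`. -/
def gammaZero (R : Type*) [CommRing R] : SimpleGraph R where
  Adj x y := x ≠ y ∧ x * y = 0
  symm := ⟨fun x y h => ⟨h.1.symm, by rw [mul_comm]; exact h.2⟩⟩
  loopless := ⟨fun x h => h.1 rfl⟩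

/-- The set `Z(R) \ {0}` of nonzero zero-divisors of `R`. -/
def zdStar (R : Type*) [CommRing R] : Set R :=
  {x | x ≠ 0 ∧ ∃ y, y ≠ 0 ∧ x * y = 0}

/-- The Anderson–Livingston zero-divisor graph `Γ(R)`: vertices are the nonzero
zero-divisors of `R`, and two distinct vertices `x`, `y` are adjacent iff `x * y = 0`.
It is the subgraph of `Γ₀(R)` induced on `Z(R) \ {0}`. -/
def gammaGraph (R : Type*) [CommRing R] : SimpleGraph (zdStar R) :=
  (gammaZero R).induce (zdStar R)

/-- The clique number of a graph, as an extended natural number: the least upper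
bound of the sizes of (finite) cliques in `G`. -/
noncomputable def cliqueNumE {V : Type*} (G : SimpleGraph V) : ℕ∞ :=
  ⨆ (s : Finset V) (_ : G.IsClique (s : Set V)), (s.card : ℕ∞)


/-! In `ZMod (p ^ r)` a product `x * y` vanishes iff `r ≤ v x + v y` for the `p`-adic valuation `v`
of representatives. Hence a zero product has a square-zero factor, square-zero elements annihilate
each other, and `x` is square-zero iff it annihilates `t = p ^ ⌊r / 2⌋`. In a product of such rings
the square-zero elements together with the elements `Pi.single i t` form a clique, and sending a
vertex to itself if it is square-zero, and otherwise to `Pi.single i t` for a coordinate `i` where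
it is not, is a proper coloring whose colors are vertices of that clique. -/

namespace SimpleGraph

theorem chromaticNumber_eq_cliqueNumE_of_isClique_range {V : Type*} [Finite V]
    (G : SimpleGraph V) (f : V → V) (hclique : G.IsClique (Set.range f))
    (hf : ∀ ⦃u v⦄, G.Adj u v → f u ≠ f v) :
    G.chromaticNumber = cliqueNumE G := by
  classical
  have := Fintype.ofFinite V
  set s : Finset V := Finset.univ.image f
  have hs : (s : Set V) = Set.range f := by simp [s]
  let C : G.Coloring s :=
    Coloring.mk (fun v => ⟨f v, by simp [s]⟩) fun h heq => hf h (congrArg Subtype.val heq)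
  refine le_antisymm ?_ (iSup₂_le fun c hc => hc.card_le_chromaticNumber)
  calc G.chromaticNumber ≤ s.card := by
        simpa using C.colorable.chromaticNumber_le
    _ ≤ cliqueNumE G :=
        le_iSup₂ (f := fun (c : Finset V) (_ : G.IsClique (c : Set V)) => (c.card : ℕ∞))
          s (hs ▸ hclique)

end SimpleGraph

section LinearOrder

variable {α : Type*} [AddCommMonoid α] [LinearOrder α] [IsOrderedAddMonoid α] {r a b : α}

theorem le_add_self_or_le_add_self_of_le_add (h : r ≤ a + b) : r ≤ a + a ∨ r ≤ b + b := by
  rcases le_total a b with hab | hba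
  · exact Or.inr (h.trans (by gcongr))
  · exact Or.inl (h.trans (by gcongr))

theorem le_add_of_le_add_self (ha : r ≤ a + a) (hb : r ≤ b + b) : r ≤ a + b := by
  rcases le_total a b with hab | hba
  · exact ha.trans (by gcongr)
  · exact hb.trans (by gcongr)

end LinearOrder

structure IsSquareZeroTest {R : Type*} [CommRing R] (t : R) : Prop where
  ne_zero : t ≠ 0
  mul_eq_zero_iff : ∀ x, x * t = 0 ↔ x * x = 0
  mul_self_eq_zero_or_of_mul_eq_zero : ∀ {x y : R}, x * y = 0 → x * x = 0 ∨ y * y = 0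
  mul_eq_zero_of_mul_self_eq_zero : ∀ {x y : R}, x * x = 0 → y * y = 0 → x * y = 0

namespace ZMod

variable {p r : ℕ}

theorem mul_eq_zero_iff_le_emultiplicity (hp : p.Prime) {x y : ZMod (p ^ r)} :
    x * y = 0 ↔ (r : ℕ∞) ≤ emultiplicity p x.val + emultiplicity p y.val := by
  have : NeZero (p ^ r) := ⟨pow_ne_zero _ hp.ne_zero⟩
  rw [← emultiplicity_mul hp.prime, ← pow_dvd_iff_le_emultiplicity, ← ZMod.natCast_eq_zero_iff,
    Nat.cast_mul, ZMod.natCast_zmod_val, ZMod.natCast_zmod_val]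

theorem val_pow_div_two (hp : p.Prime) (hr : 0 < r) :
    ((p : ZMod (p ^ r)) ^ (r / 2)).val = p ^ (r / 2) := by
  rw [← Nat.cast_pow, ZMod.val_natCast,
    Nat.mod_eq_of_lt (Nat.pow_lt_pow_right hp.one_lt (by omega))]

theorem isSquareZeroTest_pow_div_two (hp : p.Prime) (hr : 0 < r) :
    IsSquareZeroTest ((p : ZMod (p ^ r)) ^ (r / 2)) where
  ne_zero h := by
    have := val_pow_div_two hp hr
    rw [h, ZMod.val_zero] at this
    exact pow_ne_zero _ hp.ne_zero this.symm
  mul_eq_zero_iff x := by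
    rw [mul_eq_zero_iff_le_emultiplicity hp, mul_eq_zero_iff_le_emultiplicity hp,
      val_pow_div_two hp hr, emultiplicity_pow_self_of_prime hp.prime]
    induction emultiplicity p x.val using ENat.recTopCoe with
    | top => simp
    | coe n => norm_cast; omega
  mul_self_eq_zero_or_of_mul_eq_zero h := by
    simpa only [mul_eq_zero_iff_le_emultiplicity hp] using le_add_self_or_le_add_self_of_le_add
      ((mul_eq_zero_iff_le_emultiplicity hp).1 h)
  mul_eq_zero_of_mul_self_eq_zero hx hy := by
    rw [mul_eq_zero_iff_le_emultiplicity hp] at *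
    exact le_add_of_le_add_self hx hy

end ZMod

section Pi

variable {ι : Type*} [DecidableEq ι] {R : ι → Type*} [∀ i, CommRing (R i)] {t : ∀ i, R i}

theorem IsSquareZeroTest.single_mul_eq_zero_iff {i : ι} (ht : IsSquareZeroTest (t i))
    (x : ∀ i, R i) : Pi.single i (t i) * x = 0 ↔ x i * x i = 0 := by
  rw [← Pi.single_mul_left, Pi.single_eq_zero_iff, mul_comm, ht.mul_eq_zero_iff]

theorem Pi.single_mem_zdStar (ht : ∀ i, IsSquareZeroTest (t i)) {x : ∀ i, R i}
    (hx : x ∈ zdStar (∀ i, R i)) (i : ι) : Pi.single i (t i) ∈ zdStar (∀ i, R i) := by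
  obtain ⟨hx0, y, hy0, hxy⟩ := hx
  refine ⟨by simpa using (ht i).ne_zero, ?_⟩
  rcases (ht i).mul_self_eq_zero_or_of_mul_eq_zero (congrFun hxy i) with hxi | hyi
  · exact ⟨x, hx0, ((ht i).single_mul_eq_zero_iff x).2 hxi⟩
  · exact ⟨y, hy0, ((ht i).single_mul_eq_zero_iff y).2 hyi⟩

open Classical in
noncomputable def squareZeroRetract (t x : ∀ i, R i) : ∀ i, R i :=
  if h : ∃ i, x i * x i ≠ 0 then Pi.single h.choose (t h.choose) else x

theorem squareZeroRetract_cases (t x : ∀ i, R i) :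
    (x * x = 0 ∧ squareZeroRetract t x = x) ∨
      ∃ i, x i * x i ≠ 0 ∧ squareZeroRetract t x = Pi.single i (t i) := by
  unfold squareZeroRetract
  split_ifs with h
  · exact Or.inr ⟨_, h.choose_spec, rfl⟩
  · push Not at h
    exact Or.inl ⟨funext h, rfl⟩

theorem squareZeroRetract_mem_zdStar (ht : ∀ i, IsSquareZeroTest (t i)) {x : ∀ i, R i}
    (hx : x ∈ zdStar (∀ i, R i)) :
    squareZeroRetract t x ∈ zdStar (∀ i, R i) := by
  rcases squareZeroRetract_cases t x with ⟨-, h⟩ | ⟨i, -, h⟩ <;> rw [h]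
  · exact hx
  · exact Pi.single_mem_zdStar ht hx i

theorem squareZeroRetract_mul_eq_zero (ht : ∀ i, IsSquareZeroTest (t i)) {x y : ∀ i, R i}
    (hne : squareZeroRetract t x ≠ squareZeroRetract t y) :
    squareZeroRetract t x * squareZeroRetract t y = 0 := by
  rcases squareZeroRetract_cases t x with ⟨hx, hxr⟩ | ⟨i, -, hxr⟩ <;>
    rcases squareZeroRetract_cases t y with ⟨hy, hyr⟩ | ⟨j, -, hyr⟩ <;>
    rw [hxr, hyr] at hne ⊢
  · exact funext fun i => (ht i).mul_eq_zero_of_mul_self_eq_zero (congrFun hx i) (congrFun hy i)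
  · rw [mul_comm, (ht j).single_mul_eq_zero_iff]
    exact congrFun hx j
  · rw [(ht i).single_mul_eq_zero_iff]
    exact congrFun hy i
  · have hij : i ≠ j := by rintro rfl; exact hne rfl
    rw [(ht i).single_mul_eq_zero_iff, Pi.single_eq_of_ne hij, mul_zero]

theorem squareZeroRetract_ne_of_mul_eq_zero (ht : ∀ i, IsSquareZeroTest (t i)) {x y : ∀ i, R i}
    (hxy : x * y = 0) (hne : x ≠ y) :
    squareZeroRetract t x ≠ squareZeroRetract t y := by
  intro heq
  rcases squareZeroRetract_cases t x with ⟨-, hxr⟩ | ⟨i, hxi, hxr⟩ <;>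
    rcases squareZeroRetract_cases t y with ⟨-, hyr⟩ | ⟨j, hyj, hyr⟩ <;>
    rw [hxr, hyr] at heq
  · exact hne heq
  · subst heq
    exact hyj (((ht j).single_mul_eq_zero_iff y).1 hxy)
  · subst heq
    exact hxi (((ht i).single_mul_eq_zero_iff x).1 (by rwa [mul_comm]))
  · obtain rfl : i = j := by
      by_contra hij
      simpa [Pi.single_eq_of_ne hij, (ht i).ne_zero] using congrFun heq i
    rcases (ht i).mul_self_eq_zero_or_of_mul_eq_zero (congrFun hxy i) with h | h
    exacts [hxi h, hyj h]

theorem chromaticNumber_gammaGraph_pi_eq_cliqueNumE [Finite ι] [∀ i, Finite (R i)]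
    (ht : ∀ i, IsSquareZeroTest (t i)) :
    (gammaGraph (∀ i, R i)).chromaticNumber = cliqueNumE (gammaGraph (∀ i, R i)) := by
  refine (gammaGraph _).chromaticNumber_eq_cliqueNumE_of_isClique_range
    (fun v => ⟨squareZeroRetract t v, squareZeroRetract_mem_zdStar ht v.2⟩) ?_
    fun u v huv heq => squareZeroRetract_ne_of_mul_eq_zero ht huv.2 huv.1 (congrArg Subtype.val heq)
  rintro _ ⟨u, rfl⟩ _ ⟨v, rfl⟩ huv
  have hne : squareZeroRetract t u ≠ squareZeroRetract t v := fun h => huv (Subtype.ext h)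
  exact ⟨hne, squareZeroRetract_mul_eq_zero ht hne⟩

end Pi

theorem stmt13_general (k : ℕ) (p r : Fin k → ℕ)
    (hp : ∀ i, (p i).Prime) (hr : ∀ i, 0 < r i) :
    (gammaGraph (∀ i, ZMod (p i ^ r i))).chromaticNumber =
      cliqueNumE (gammaGraph (∀ i, ZMod (p i ^ r i))) := by
  have (i : Fin k) : NeZero (p i ^ r i) := ⟨pow_ne_zero _ (hp i).ne_zero⟩
  exact chromaticNumber_gammaGraph_pi_eq_cliqueNumE
    fun i => ZMod.isSquareZeroTest_pow_div_two (hp i) (hr i)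

theorem stmt13 (k : ℕ) (hk : 1 ≤ k) (p r : Fin k → ℕ)
    (hp : ∀ i, (p i).Prime) (hr : ∀ i, 0 < r i) :
    (gammaGraph (∀ i, ZMod (p i ^ r i))).chromaticNumber =
      cliqueNumE (gammaGraph (∀ i, ZMod (p i ^ r i))) :=
  stmt13_general k p r hp hr
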